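/- Let ε = exp(2πi/5), let S, V ∈ SL(2,ℂ) act on ℂ² by S(x,y) = (ε³x, ε²y) and V(x,y) = (−y, x), and define the degree-11 polynomial map φ(x,y) = (−x^11 + 66x^6y^5 + 11xy^10, 11x^10y − 66x^5y^6 − y^11). Then φ is equivariant under both matrices: φ(S(x,y)) = S(φ(x,y)) and φ(V(x,y)) = V(φ(x,y)), where on the right-hand sides S and V act by matrix-vector multiplication on the pair of component polynomials. -/
import Mathlib


open MvPolynomial

/-- Substitution of the linear map given by a 2×2 matrix `A` into a two-variable
polynomial: `G(A·(x,y)) = G(ax+by, cx+dy)`. -/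
noncomputable def subst (A : Matrix (Fin 2) (Fin 2) ℂ) (G : MvPolynomial (Fin 2) ℂ) :
    MvPolynomial (Fin 2) ℂ :=
  aeval (fun i => C (A i 0) * X 0 + C (A i 1) * X 1) G

/-- The fifth root of unity `ε = exp(2πi/5)`. -/
noncomputable def ε : ℂ := Complex.exp (2 * (Real.pi : ℂ) * Complex.I / 5)

/-- The diagonal icosahedral generator `S = [[ε³,0],[0,ε²]] ∈ SL(2,ℂ)`. -/
noncomputable def Smat : Matrix (Fin 2) (Fin 2) ℂ := !![ε ^ 3, 0; 0, ε ^ 2]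

/-- The quarter-turn generator `V = [[0,−1],[1,0]] ∈ SL(2,ℂ)`. -/
noncomputable def Vmat : Matrix (Fin 2) (Fin 2) ℂ := !![0, -1; 1, 0]

/-- First component of the degree-11 icosahedral equivariant `φ`. -/
noncomputable def φ₁ : MvPolynomial (Fin 2) ℂ :=
  -(X 0) ^ 11 + 66 * (X 0) ^ 6 * (X 1) ^ 5 + 11 * X 0 * (X 1) ^ 10

/-- Second component of the degree-11 icosahedral equivariant `φ`. -/
noncomputable def φ₂ : MvPolynomial (Fin 2) ℂ :=
  11 * (X 0) ^ 10 * X 1 - 66 * (X 0) ^ 5 * (X 1) ^ 6 - (X 1) ^ 11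

lemma eps_pow_five : ε ^ 5 = 1 := by
  rw [ε, ← Complex.exp_nat_mul]
  rw [show (5 : ℕ) * (2 * (Real.pi : ℂ) * Complex.I / 5) = 2 * Real.pi * Complex.I by
    push_cast; ring]
  exact Complex.exp_two_pi_mul_I

lemma Ceps_red (k m : ℕ) :
    (C ε : MvPolynomial (Fin 2) ℂ) ^ (5 * k + m) = C ε ^ m := by
  rw [pow_add, pow_mul, ← map_pow, eps_pow_five, map_one, one_pow, one_mul]

/-- The degree-11 map `φ = (φ₁, φ₂)` is equivariant under the generators `S` and `V`:
`φ(A·(x,y)) = A·(φ(x,y))` for `A = S, V`, stated componentwise. -/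
theorem φ_equivariant_under_S_and_V :
    (subst Smat φ₁ = C (Smat 0 0) * φ₁ + C (Smat 0 1) * φ₂ ∧
      subst Smat φ₂ = C (Smat 1 0) * φ₁ + C (Smat 1 1) * φ₂) ∧
    (subst Vmat φ₁ = C (Vmat 0 0) * φ₁ + C (Vmat 0 1) * φ₂ ∧
      subst Vmat φ₂ = C (Vmat 1 0) * φ₁ + C (Vmat 1 1) * φ₂) := by
  have e22 : (C ε : MvPolynomial (Fin 2) ℂ) ^ 22 = C ε ^ 2 := Ceps_red 4 2
  have e23 : (C ε : MvPolynomial (Fin 2) ℂ) ^ 23 = C ε ^ 3 := Ceps_red 4 3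
  have e27 : (C ε : MvPolynomial (Fin 2) ℂ) ^ 27 = C ε ^ 2 := Ceps_red 5 2
  have e28 : (C ε : MvPolynomial (Fin 2) ℂ) ^ 28 = C ε ^ 3 := Ceps_red 5 3
  have e32 : (C ε : MvPolynomial (Fin 2) ℂ) ^ 32 = C ε ^ 2 := Ceps_red 6 2
  have e33 : (C ε : MvPolynomial (Fin 2) ℂ) ^ 33 = C ε ^ 3 := Ceps_red 6 3
  refine ⟨⟨?_, ?_⟩, ?_, ?_⟩ <;>
    simp [subst, Smat, Vmat, φ₁, φ₂, algebraMap_eq, map_ofNat] <;>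
    ring_nf <;>
    simp only [e22, e23, e27, e28, e32, e33] <;>
    ring
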